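/- arXiv:1606.04046 — 4 statements merged into one kernel-verified Lean document; each statement's English description precedes it below -/
import Mathlib

section
/- For H < 1/2 and integers n ≥ 2, T > 0, there is a constant C not depending on T such that for all t ∈ [0,T], the sum over j = 0, …, ⌊nT⌋ - 1 of |E[(B^H_{(j+1)/n} - B^H_{j/n}) B^H_t]| is at most C ⌊nT⌋^{2H} n^{-2H}. -/
open MeasureTheory Real

/-- Covariance function of fractional Brownian motion with Hurst parameter `H`. -/
noncomputable def fbmCov (H s t : ℝ) : ℝ :=
  (s ^ (2*H) + t ^ (2*H) - |t - s| ^ (2*H)) / 2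

/-!
Writing `p = 2H`, the increment `R(b, t) - R(a, t)` is half the increment of `x ↦ x ^ p` minus
half the increment of `x ↦ |t - x| ^ p`. The first function is monotone and the second splits as
`(t - x)₊ ^ p + (x - t)₊ ^ p`, an antitone plus a monotone function, so along any increasing
partition `0 ≤ s₀ ≤ … ≤ s_N` the absolute increments add up to at most
`s_N ^ p + t ^ p / 2`.
For `s_j = j / n` and `N = ⌊n T⌋ ≥ 1` we have `t ≤ T ≤ 2 N / n`, whence the bound with
`C = 1 + 2 ^ p`.
-/

open Finset

theorem Monotone.sum_range_abs_sub {a : ℕ → ℝ} (ha : Monotone a) (N : ℕ) :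
    ∑ j ∈ range N, |a (j + 1) - a j| = a N - a 0 := by
  rw [← sum_range_sub]
  exact sum_congr rfl fun j _ => abs_of_nonneg (sub_nonneg.2 (ha j.le_succ))

theorem Antitone.sum_range_abs_sub {a : ℕ → ℝ} (ha : Antitone a) (N : ℕ) :
    ∑ j ∈ range N, |a (j + 1) - a j| = a 0 - a N := by
  rw [← sum_range_sub']
  exact sum_congr rfl fun j _ => abs_of_nonpos (sub_nonpos.2 (ha j.le_succ)) |>.trans (neg_sub _ _)

theorem abs_rpow_eq_max_rpow_add_max_rpow {p : ℝ} (hp : 0 < p) (y : ℝ) :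
    |y| ^ p = max y 0 ^ p + max (-y) 0 ^ p := by
  rcases le_total 0 y with hy | hy
  · simp [abs_of_nonneg hy, hy, zero_rpow hp.ne']
  · simp [abs_of_nonpos hy, hy, zero_rpow hp.ne']

theorem Nat.le_two_mul_floor {a : ℝ} (ha : 1 ≤ ⌊a⌋₊) : a ≤ 2 * ⌊a⌋₊ := by
  have h1 : (1 : ℝ) ≤ ⌊a⌋₊ := by exact_mod_cast ha
  linarith [Nat.lt_floor_add_one a]

theorem sum_range_abs_fbmCov_sub_le {H t : ℝ} (hH : 0 < H) (ht : 0 ≤ t) {s : ℕ → ℝ}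
    (hs : Monotone s) (hs0 : 0 ≤ s 0) (N : ℕ) :
    ∑ j ∈ range N, |fbmCov H (s (j + 1)) t - fbmCov H (s j) t|
      ≤ s N ^ (2 * H) + t ^ (2 * H) / 2 := by
  set p := 2 * H
  have hp : 0 < p := by positivity
  have hs_nonneg : ∀ j, 0 ≤ s j := fun j => hs0.trans (hs j.zero_le)
  set g : ℕ → ℝ := fun j => s j ^ p
  set u : ℕ → ℝ := fun j => max (t - s j) 0 ^ p
  set v : ℕ → ℝ := fun j => max (s j - t) 0 ^ p
  have hg : Monotone g := fun i j hij => rpow_le_rpow (hs_nonneg i) (hs hij) hp.le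
  have hu : Antitone u := fun i j hij =>
    rpow_le_rpow (le_max_right _ _) (max_le_max (sub_le_sub_left (hs hij) t) le_rfl) hp.le
  have hv : Monotone v := fun i j hij =>
    rpow_le_rpow (le_max_right _ _) (max_le_max (sub_le_sub_right (hs hij) t) le_rfl) hp.le
  have hcov : ∀ j, fbmCov H (s j) t = (g j + t ^ p - (u j + v j)) / 2 := fun j => by
    rw [fbmCov, abs_rpow_eq_max_rpow_add_max_rpow hp, neg_sub]
  have hterm : ∀ j, |fbmCov H (s (j + 1)) t - fbmCov H (s j) t|
      ≤ (|g (j + 1) - g j| + |u (j + 1) - u j| + |v (j + 1) - v j|) / 2 := fun j => by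
    rw [hcov, hcov, ← sub_div, abs_div, abs_two]
    gcongr
    calc _ = |(g (j + 1) - g j) - (u (j + 1) - u j) - (v (j + 1) - v j)| := by congr 1; ring
      _ ≤ |(g (j + 1) - g j) - (u (j + 1) - u j)| + |v (j + 1) - v j| := abs_sub _ _
      _ ≤ _ := by gcongr; exact abs_sub _ _
  have hu0 : u 0 ≤ t ^ p := rpow_le_rpow (le_max_right _ _)
    (max_le (by linarith) ht) hp.le
  have hvN : v N ≤ g N := rpow_le_rpow (le_max_right _ _)
    (max_le (by linarith) (hs_nonneg N)) hp.le
  calc _ ≤ ∑ j ∈ range N, (|g (j + 1) - g j| + |u (j + 1) - u j| + |v (j + 1) - v j|) / 2 :=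
        sum_le_sum fun j _ => hterm j
    _ = (g N - g 0 + (u 0 - u N) + (v N - v 0)) / 2 := by
        rw [← sum_div, sum_add_distrib, sum_add_distrib, hg.sum_range_abs_sub,
          hu.sum_range_abs_sub, hv.sum_range_abs_sub]
    _ ≤ g N + t ^ p / 2 := by
        have : 0 ≤ g 0 := rpow_nonneg (hs_nonneg 0) p
        have : 0 ≤ u N := rpow_nonneg (le_max_right _ _) p
        have : 0 ≤ v 0 := rpow_nonneg (le_max_right _ _) p
        linarith

theorem fbm_sum_increment_cov_bound_general {Ω : Type*} [MeasurableSpace Ω] (P : Measure Ω)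
    (H : ℝ) (hH0 : 0 < H)
    (B : ℝ → Ω → ℝ)
    (hint : ∀ s t : ℝ, Integrable (fun ω => B s ω * B t ω) P)
    (hcov : ∀ s t : ℝ, 0 ≤ s → 0 ≤ t → ∫ ω, B s ω * B t ω ∂P = fbmCov H s t)
    (n : ℕ) :
    ∃ C > 0, ∀ T > (0:ℝ), ∀ t ∈ Set.Icc (0:ℝ) T,
      ∑ j ∈ Finset.range ⌊(n:ℝ)*T⌋₊,
        |∫ ω, (B (((j:ℝ)+1)/n) ω - B ((j:ℝ)/n) ω) * B t ω ∂P|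
      ≤ C * (⌊(n:ℝ)*T⌋₊ : ℝ) ^ (2*H) * (n : ℝ) ^ (-(2*H)) := by
  refine ⟨1 + 2 ^ (2 * H), by positivity, fun T hT t ⟨ht0, htT⟩ => ?_⟩
  set N := ⌊(n:ℝ) * T⌋₊
  rcases N.eq_zero_or_pos with hN | hN
  · simp [hN, zero_rpow (by positivity : 2 * H ≠ 0)]
  have hn0 : (0 : ℝ) < n := Nat.cast_pos.2 (Nat.pos_of_ne_zero fun h => by simp [N, h] at hN)
  have hincr : ∀ j : ℕ, ∫ ω, (B (((j:ℝ)+1)/n) ω - B ((j:ℝ)/n) ω) * B t ω ∂P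
      = fbmCov H (((j + 1 : ℕ) : ℝ) / n) t - fbmCov H ((j : ℝ) / n) t := fun j => by
    simp_rw [sub_mul]
    rw [integral_sub (hint _ _) (hint _ _), hcov _ _ (by positivity) ht0,
      hcov _ _ (by positivity) ht0]
    push_cast; rfl
  have hT : T ≤ 2 * ((N : ℝ) / n) := by
    rw [mul_div_assoc', le_div_iff₀ hn0, mul_comm T]
    exact Nat.le_two_mul_floor hN
  have ht : t ^ (2 * H) ≤ 2 ^ (2 * H) * ((N : ℝ) / n) ^ (2 * H) := by
    rw [← mul_rpow zero_le_two (by positivity)]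
    exact rpow_le_rpow ht0 (htT.trans hT) (by positivity)
  have hs : Monotone fun j : ℕ => (j : ℝ) / n := fun i j hij =>
    div_le_div_of_nonneg_right (by exact_mod_cast hij) n.cast_nonneg
  calc _ = ∑ j ∈ range N,
        |fbmCov H (((j + 1 : ℕ) : ℝ) / n) t - fbmCov H ((j : ℝ) / n) t| :=
        sum_congr rfl fun j _ => by rw [hincr]
    _ ≤ ((N : ℝ) / n) ^ (2 * H) + t ^ (2 * H) / 2 :=
        sum_range_abs_fbmCov_sub_le hH0 ht0 hs (by simp) N
    _ ≤ (1 + 2 ^ (2 * H)) * ((N : ℝ) / n) ^ (2 * H) := by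
        have : 0 ≤ 2 ^ (2 * H) * ((N : ℝ) / n) ^ (2 * H) := by positivity
        linarith
    _ = _ := by rw [div_rpow (by positivity) hn0.le, rpow_neg hn0.le]; ring

theorem fbm_sum_increment_cov_bound {Ω : Type*} [MeasurableSpace Ω] (P : Measure Ω)
    [IsProbabilityMeasure P]
    (H : ℝ) (hH0 : 0 < H) (hH : H < 1/2)
    (B : ℝ → Ω → ℝ)
    (hint : ∀ s t : ℝ, Integrable (fun ω => B s ω * B t ω) P)
    (hcov : ∀ s t : ℝ, 0 ≤ s → 0 ≤ t → ∫ ω, B s ω * B t ω ∂P = fbmCov H s t)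
    (n : ℕ) (hn : 2 ≤ n) :
    ∃ C > 0, ∀ T > (0:ℝ), ∀ t ∈ Set.Icc (0:ℝ) T,
      ∑ j ∈ Finset.range ⌊(n:ℝ)*T⌋₊,
        |∫ ω, (B (((j:ℝ)+1)/n) ω - B ((j:ℝ)/n) ω) * B t ω ∂P|
      ≤ C * (⌊(n:ℝ)*T⌋₊ : ℝ) ^ (2*H) * (n : ℝ) ^ (-(2*H)) :=
  fbm_sum_increment_cov_bound_general P H hH0 B hint hcov n
end

section
/- Fix H < 1/2, T > 0, and two integers n > m ≥ 2. For each integer j ≥ 0, let k(j) = max{i ≥ 0 : i/m ≤ j/n}. Then there is a constant C depending only on T and H such that the sum over j = 0, …, ⌊nT⌋ - 1 of |E[(B^H_{(j+1)/n} - B^H_{j/n}) B^H_{k(j)/m}]| is at most C m^{1-2H}. -/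
open MeasureTheory Real

/-! With `p = 2H` and `0 ≤ u ≤ t ≤ s`, the covariance of an increment with a past value is
`E[(B_s - B_t) B_u] = ((s^p - t^p) - ((s-u)^p - (t-u)^p)) / 2`, a difference of two nonnegative
brackets, so its absolute value is at most half their sum. Along the fine grid `t_j = j/n` the
first bracket telescopes to `(N/n)^p ≤ T^p`. For the second, subadditivity of `x ↦ x^p` (`p ≤ 1`)
splits `t_{j+1} - u_j` at the next coarse point `u_{j+1} = k(j+1)/m`, so it telescopes too, up to
the error `Σ (u_{j+1} - u_j)^p`. Each coarse step is `d/m` with `d ∈ ℕ`, and `(d/m)^p ≤ d m^{-p}`,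
so the error is at most `k(N) m^{-p} ≤ T m^{1-p}`. -/

section Covariance

variable {H s t u u' : ℝ}

theorem fbmCov_sub_fbmCov (hut : u ≤ t) (hts : t ≤ s) :
    fbmCov H s u - fbmCov H t u
      = ((s ^ (2*H) - t ^ (2*H)) - ((s - u) ^ (2*H) - (t - u) ^ (2*H))) / 2 := by
  unfold fbmCov
  rw [abs_sub_comm u s, abs_sub_comm u t, abs_of_nonneg (by linarith : 0 ≤ s - u),
    abs_of_nonneg (sub_nonneg.2 hut)]
  ring

theorem abs_fbmCov_sub_le (hH0 : 0 ≤ H) (hH : H ≤ 1/2) (ht : 0 ≤ t) (hut : u ≤ t) (hts : t ≤ s)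
    (huu' : u ≤ u') (hu's : u' ≤ s) :
    |fbmCov H s u - fbmCov H t u|
      ≤ ((s ^ (2*H) - t ^ (2*H)) + ((s - u') ^ (2*H) - (t - u) ^ (2*H))
          + (u' - u) ^ (2*H)) / 2 := by
  have hp0 : 0 ≤ 2 * H := by linarith
  have hA : t ^ (2*H) ≤ s ^ (2*H) := rpow_le_rpow ht hts hp0
  have hB : (t - u) ^ (2*H) ≤ (s - u) ^ (2*H) := rpow_le_rpow (by linarith) (by linarith) hp0
  have hsplit : (s - u) ^ (2*H) ≤ (s - u') ^ (2*H) + (u' - u) ^ (2*H) := by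
    have := rpow_add_le_add_rpow (sub_nonneg.2 hu's) (sub_nonneg.2 huu') hp0 (by linarith)
    rwa [sub_add_sub_cancel] at this
  rw [fbmCov_sub_fbmCov hut hts, abs_le]
  constructor <;> linarith

theorem sum_abs_fbmCov_sub_le (hH0 : 0 ≤ H) (hH : H ≤ 1/2) {t u : ℕ → ℝ} (ht0 : 0 ≤ t 0)
    (ht : Monotone t) (hu : Monotone u) (hut : ∀ j, u j ≤ t j) (N : ℕ) :
    ∑ j ∈ Finset.range N, |fbmCov H (t (j+1)) (u j) - fbmCov H (t j) (u j)|
      ≤ (t N ^ (2*H) + (t N - u N) ^ (2*H)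
          + ∑ j ∈ Finset.range N, (u (j+1) - u j) ^ (2*H)) / 2 := by
  calc _ ≤ ∑ j ∈ Finset.range N, ((t (j+1) ^ (2*H) - t j ^ (2*H))
            + ((t (j+1) - u (j+1)) ^ (2*H) - (t j - u j) ^ (2*H)) + (u (j+1) - u j) ^ (2*H)) / 2 :=
        Finset.sum_le_sum fun j _ => abs_fbmCov_sub_le hH0 hH (ht0.trans (ht j.zero_le)) (hut j)
          (ht j.le_succ) (hu j.le_succ) (hut _)
    _ = (t N ^ (2*H) - t 0 ^ (2*H) + ((t N - u N) ^ (2*H) - (t 0 - u 0) ^ (2*H))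
          + ∑ j ∈ Finset.range N, (u (j+1) - u j) ^ (2*H)) / 2 := by
        rw [← Finset.sum_div, Finset.sum_add_distrib, Finset.sum_add_distrib,
          Finset.sum_range_sub (fun j => t j ^ (2*H)),
          Finset.sum_range_sub (fun j => (t j - u j) ^ (2*H))]
    _ ≤ _ := by
        have := rpow_nonneg ht0 (2*H)
        have := rpow_nonneg (sub_nonneg.2 (hut 0)) (2*H)
        linarith

end Covariance

section Steps

variable {p c : ℝ}

theorem natCast_div_rpow_le (hp0 : 0 < p) (hp1 : p ≤ 1) (hc : 0 ≤ c) (d : ℕ) :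
    ((d : ℝ) / c) ^ p ≤ d * c ^ (-p) := by
  have hd : (d : ℝ) ^ p ≤ d := by
    rcases Nat.eq_zero_or_pos d with rfl | hd
    · simp [zero_rpow hp0.ne']
    · exact rpow_le_self_of_one_le (by exact_mod_cast hd) hp1
  rw [div_rpow d.cast_nonneg hc, rpow_neg hc, ← div_eq_mul_inv]
  exact div_le_div_of_nonneg_right hd (rpow_nonneg hc p)

theorem sum_natCast_div_sub_rpow_le (hp0 : 0 < p) (hp1 : p ≤ 1) (hc : 0 ≤ c) {k : ℕ → ℕ}
    (hk : Monotone k) (N : ℕ) :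
    ∑ j ∈ Finset.range N, ((k (j+1) : ℝ) / c - k j / c) ^ p ≤ ((k N : ℝ) - k 0) * c ^ (-p) := by
  calc _ ≤ ∑ j ∈ Finset.range N, ((k (j+1) : ℝ) - k j) * c ^ (-p) := by
        refine Finset.sum_le_sum fun j _ => ?_
        rw [← sub_div, ← Nat.cast_sub (hk j.le_succ)]
        exact natCast_div_rpow_le hp0 hp1 hc _
    _ = _ := by rw [← Finset.sum_mul, Finset.sum_range_sub (fun j => (k j : ℝ))]

end Steps

section Grid

variable {m n : ℕ}

/-- The last point of the coarse grid `ℕ / m` at or before `j / n`, i.e. `k(j) / m`. -/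
noncomputable def coarsePoint (m n j : ℕ) : ℝ := ((j * m / n : ℕ) : ℝ) / m

theorem monotone_coarsePoint : Monotone (coarsePoint m n) := fun _ _ h =>
  div_le_div_of_nonneg_right (by gcongr) m.cast_nonneg

theorem coarsePoint_le (hm : 0 < m) (hn : 0 < n) (j : ℕ) : coarsePoint m n j ≤ (j : ℝ) / n := by
  rw [coarsePoint, div_le_div_iff₀ (by positivity) (by positivity)]
  exact_mod_cast Nat.div_mul_le_self (j * m) n

theorem div_sub_coarsePoint_lt (hm : 0 < m) (hn : 0 < n) (j : ℕ) :
    (j : ℝ) / n - coarsePoint m n j < 1 / m := by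
  have h : ((j * m : ℕ) : ℝ) < (j * m / n : ℕ) * n + n := by
    exact_mod_cast Nat.lt_div_mul_add hn
  push_cast at h
  rw [coarsePoint, sub_lt_iff_lt_add, ← add_div,
    div_lt_div_iff₀ (by positivity) (by positivity)]
  linarith

theorem sum_coarsePoint_sub_rpow_le {p : ℝ} (hp0 : 0 < p) (hp1 : p ≤ 1) (hm : 0 < m) (N : ℕ) :
    ∑ j ∈ Finset.range N, (coarsePoint m n (j+1) - coarsePoint m n j) ^ p
      ≤ coarsePoint m n N * (m : ℝ) ^ (1 - p) := by
  have hmR : (0 : ℝ) < m := by exact_mod_cast hm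
  calc _ ≤ ((N * m / n : ℕ) - ((0 * m / n : ℕ) : ℝ)) * (m : ℝ) ^ (-p) :=
        sum_natCast_div_sub_rpow_le hp0 hp1 hmR.le
          (fun _ _ h => Nat.div_le_div_right (Nat.mul_le_mul_right m h)) N
    _ = _ := by
        rw [coarsePoint, sub_eq_add_neg 1 p, rpow_add hmR, rpow_one]
        field_simp
        simp

theorem sum_abs_fbmCov_sub_coarsePoint_le {H : ℝ} (hH0 : 0 < H) (hH : H ≤ 1/2) (hm : 0 < m)
    (hn : 0 < n) (N : ℕ) :
    ∑ j ∈ Finset.range N,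
        |fbmCov H (((j+1 : ℕ) : ℝ) / n) (coarsePoint m n j)
          - fbmCov H ((j : ℝ) / n) (coarsePoint m n j)|
      ≤ (((N : ℝ) / n) ^ (2*H) + 1 + coarsePoint m n N * (m : ℝ) ^ (1 - 2*H)) / 2 := by
  have hlag : ((N : ℝ) / n - coarsePoint m n N) ^ (2*H) ≤ 1 :=
    rpow_le_one (sub_nonneg.2 (coarsePoint_le hm hn N))
      ((div_sub_coarsePoint_lt hm hn N).le.trans (div_le_one_of_le₀ (by exact_mod_cast hm)
        m.cast_nonneg)) (by linarith)
  have hsteps :=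
    sum_coarsePoint_sub_rpow_le (n := n) (p := 2*H) (by linarith) (by linarith) hm N
  have := sum_abs_fbmCov_sub_le hH0.le hH (t := fun j : ℕ => (j : ℝ) / n) (by simp)
    (fun _ _ h => div_le_div_of_nonneg_right (by exact_mod_cast h) n.cast_nonneg)
    monotone_coarsePoint (coarsePoint_le hm hn) N
  linarith

end Grid

theorem fbm_two_partitions_bound_one_general {Ω : Type*} [MeasurableSpace Ω] (P : Measure Ω)
    (H : ℝ) (hH0 : 0 < H) (hH : H < 1/2)
    (B : ℝ → Ω → ℝ)
    (hint : ∀ s t : ℝ, Integrable (fun ω => B s ω * B t ω) P)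
    (hcov : ∀ s t : ℝ, 0 ≤ s → 0 ≤ t → ∫ ω, B s ω * B t ω ∂P = fbmCov H s t)
    (T : ℝ) (hT : 0 < T) :
    ∃ C > 0, ∀ m n : ℕ, 2 ≤ m → m < n →
      ∑ j ∈ Finset.range ⌊(n:ℝ)*T⌋₊,
        |∫ ω, (B (((j:ℝ)+1)/n) ω - B ((j:ℝ)/n) ω) * B ((((j*m)/n : ℕ) : ℝ)/m) ω ∂P|
      ≤ C * (m : ℝ) ^ (1 - 2*H) := by
  refine ⟨(T ^ (2*H) + 1 + T) / 2, by positivity, fun m n hm hmn => ?_⟩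
  have hm0 : 0 < m := by omega
  have hn0 : 0 < n := by omega
  set N := ⌊(n:ℝ)*T⌋₊
  have hNT : (N : ℝ) / n ≤ T := by
    rw [div_le_iff₀ (by exact_mod_cast hn0), mul_comm]
    exact Nat.floor_le (by positivity)
  have hincr (j : ℕ) :
      ∫ ω, (B (((j:ℝ)+1)/n) ω - B ((j:ℝ)/n) ω) * B ((((j*m)/n : ℕ) : ℝ)/m) ω ∂P
        = fbmCov H (((j+1 : ℕ) : ℝ) / n) (coarsePoint m n j)
          - fbmCov H ((j : ℝ) / n) (coarsePoint m n j) := by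
    simp_rw [sub_mul]
    rw [integral_sub (hint _ _) (hint _ _), hcov _ _ (by positivity) (by positivity),
      hcov _ _ (by positivity) (by positivity)]
    push_cast
    rfl
  have hm1 : 1 ≤ (m : ℝ) ^ (1 - 2*H) := one_le_rpow (by exact_mod_cast hm0) (by linarith)
  calc _ ≤ (((N : ℝ) / n) ^ (2*H) + 1 + coarsePoint m n N * (m : ℝ) ^ (1 - 2*H)) / 2 := by
        simp_rw [hincr]
        exact sum_abs_fbmCov_sub_coarsePoint_le hH0 hH.le hm0 hn0 N
    _ ≤ (T ^ (2*H) + 1 + T * (m : ℝ) ^ (1 - 2*H)) / 2 := by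
        gcongr
        exact (coarsePoint_le hm0 hn0 N).trans hNT
    _ ≤ _ := by nlinarith [rpow_nonneg hT.le (2*H)]

theorem fbm_two_partitions_bound_one {Ω : Type*} [MeasurableSpace Ω] (P : Measure Ω)
    [IsProbabilityMeasure P]
    (H : ℝ) (hH0 : 0 < H) (hH : H < 1/2)
    (B : ℝ → Ω → ℝ)
    (hint : ∀ s t : ℝ, Integrable (fun ω => B s ω * B t ω) P)
    (hcov : ∀ s t : ℝ, 0 ≤ s → 0 ≤ t → ∫ ω, B s ω * B t ω ∂P = fbmCov H s t)
    (T : ℝ) (hT : 0 < T) :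
    ∃ C > 0, ∀ m n : ℕ, 2 ≤ m → m < n →
      ∑ j ∈ Finset.range ⌊(n:ℝ)*T⌋₊,
        |∫ ω, (B (((j:ℝ)+1)/n) ω - B ((j:ℝ)/n) ω) * B ((((j*m)/n : ℕ) : ℝ)/m) ω ∂P|
      ≤ C * (m : ℝ) ^ (1 - 2*H) :=
  fbm_two_partitions_bound_one_general P H hH0 hH B hint hcov T hT
end

section
/- Fix H < 1/2, T > 0, two integers n > m ≥ 2, and an index 0 ≤ i ≤ ⌊nT⌋ - 1; let k(i) = max{l ≥ 0 : l/m ≤ i/n}. Then there is a constant C depending only on T and H such that the sum over j = 0, …, ⌊nT⌋ - 1 of |E[(B^H_{(j+1)/n} - B^H_{j/n}) · ((B^H_{i/n} + B^H_{(i+1)/n})/2 - B^H_{k(i)/m})]| is at most C m^{-2H}. -/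
open MeasureTheory Real

/-!
By the covariance formula, `E[(B_b - B_a)(B_t - B_u)] = (G a - G b) / 2` with
`G x = |t - x|^{2H} - |u - x|^{2H}`, so the sum over `j` is half the variation of `G` along the
grid `j / n`. Concavity of `x ↦ x^{2H}` makes `G` increasing on `(-∞, u]`, decreasing on `[u, t]`
and increasing on `[t, ∞)`, and its subadditivity gives `|G| ≤ (t - u)^{2H}`; hence the variation
is at most `6 (t - u)^{2H}`. Finally `k(i)/m ≤ i/n` and `(i + 1)/n - k(i)/m ≤ 2/m`.
-/

theorem ConcaveOn.add_le_add_of_le {s : Set ℝ} {f : ℝ → ℝ} (hf : ConcaveOn ℝ s f) {a b c : ℝ}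
    (ha : a ∈ s) (hbc : b + c ∈ s) (hab : a ≤ b) (hc : 0 ≤ c) :
    f (b + c) + f a ≤ f (a + c) + f b := by
  rcases hc.eq_or_lt with rfl | hc
  · simp [add_comm]
  have hD : 0 < b + c - a := by linarith
  have hw₁ : 0 ≤ c / (b + c - a) := by positivity
  have hw₂ : 0 ≤ (b - a) / (b + c - a) := div_nonneg (by linarith) hD.le
  have hsum : c / (b + c - a) + (b - a) / (b + c - a) = 1 := by field_simp; ring
  have hb := hf.2 ha hbc hw₁ hw₂ hsum
  have hac := hf.2 ha hbc hw₂ hw₁ (by rw [add_comm, hsum])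
  simp only [smul_eq_mul] at hb hac
  rw [show c / (b + c - a) * a + (b - a) / (b + c - a) * (b + c) = b by field_simp; ring] at hb
  rw [show (b - a) / (b + c - a) * a + c / (b + c - a) * (b + c) = a + c by field_simp; ring] at hac
  linear_combination hb + hac - (f a + f (b + c)) * hsum

lemma sum_range_abs_sub_le_of_monotone {f : ℕ → ℝ} (hf : Monotone f) {M : ℝ}
    (hM : ∀ j, |f j| ≤ M) (N : ℕ) : ∑ j ∈ Finset.range N, |f (j + 1) - f j| ≤ 2 * M := by
  calc ∑ j ∈ Finset.range N, |f (j + 1) - f j| = ∑ j ∈ Finset.range N, (f (j + 1) - f j) :=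
        Finset.sum_congr rfl fun j _ => abs_of_nonneg (sub_nonneg.2 (hf j.le_succ))
    _ = f N - f 0 := Finset.sum_range_sub f N
    _ ≤ 2 * M := by linarith [(abs_le.1 (hM N)).2, (abs_le.1 (hM 0)).1]

lemma sum_range_abs_sub_le_of_antitone {f : ℕ → ℝ} (hf : Antitone f) {M : ℝ}
    (hM : ∀ j, |f j| ≤ M) (N : ℕ) : ∑ j ∈ Finset.range N, |f (j + 1) - f j| ≤ 2 * M := by
  simpa [abs_sub_comm, neg_add_eq_sub] using
    sum_range_abs_sub_le_of_monotone hf.neg (fun j => by simpa using hM j) N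

lemma sum_range_abs_sub_comp_le {G : ℝ → ℝ} {u t M : ℝ} (hut : u ≤ t)
    (h₁ : MonotoneOn G (Set.Iic u)) (h₂ : AntitoneOn G (Set.Icc u t))
    (h₃ : MonotoneOn G (Set.Ici t))
    (hM : ∀ x, |G x| ≤ M) {x : ℕ → ℝ} (hx : Monotone x) (N : ℕ) :
    ∑ j ∈ Finset.range N, |G (x (j + 1)) - G (x j)| ≤ 6 * M := by
  set g₁ : ℕ → ℝ := fun j => G (min (x j) u)
  set g₂ : ℕ → ℝ := fun j => G (max u (min (x j) t))
  set g₃ : ℕ → ℝ := fun j => G (max (x j) t)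
  have hg₁ : Monotone g₁ := fun i j hij =>
    h₁ (Set.mem_Iic.2 (min_le_right _ _)) (Set.mem_Iic.2 (min_le_right _ _))
      (min_le_min_right u (hx hij))
  have hg₂ : Antitone g₂ := fun i j hij =>
    h₂ ⟨le_max_left _ _, max_le hut (min_le_right _ _)⟩
      ⟨le_max_left _ _, max_le hut (min_le_right _ _)⟩
      (max_le_max_left u (min_le_min_right t (hx hij)))
  have hg₃ : Monotone g₃ := fun i j hij =>
    h₃ (Set.mem_Ici.2 (le_max_right _ _)) (Set.mem_Ici.2 (le_max_right _ _))
      (max_le_max_right t (hx hij))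
  have hsplit : ∀ j, G (x (j + 1)) - G (x j)
      = (g₁ (j + 1) - g₁ j) + (g₂ (j + 1) - g₂ j) + (g₃ (j + 1) - g₃ j) := by
    have hid : ∀ y, G y = G (min y u) + G (max u (min y t)) + G (max y t) - G u - G t := by
      intro y
      rcases le_total y u with hyu | hyu
      · simp only [hyu, inf_of_le_left, hyu.trans hut, sup_of_le_left, sup_of_le_right]; ring
      rcases le_total y t with hyt | hyt
      · simp only [hyu, inf_of_le_right, hyt, inf_of_le_left, sup_of_le_right]; ring
      · simp only [hyu, inf_of_le_right, hyt, hut, sup_of_le_right, sup_of_le_left]; ring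
    intro j
    simp only [g₁, g₂, g₃]
    rw [hid (x (j + 1)), hid (x j)]
    ring
  calc ∑ j ∈ Finset.range N, |G (x (j + 1)) - G (x j)|
      ≤ ∑ j ∈ Finset.range N,
          (|g₁ (j + 1) - g₁ j| + |g₂ (j + 1) - g₂ j| + |g₃ (j + 1) - g₃ j|) :=
        Finset.sum_le_sum fun j _ => (hsplit j).symm ▸ abs_add_three _ _ _
    _ ≤ 2 * M + 2 * M + 2 * M := by
        simp only [Finset.sum_add_distrib]
        gcongr
        · exact sum_range_abs_sub_le_of_monotone hg₁ (fun j => hM _) N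
        · exact sum_range_abs_sub_le_of_antitone hg₂ (fun j => hM _) N
        · exact sum_range_abs_sub_le_of_monotone hg₃ (fun j => hM _) N
    _ = 6 * M := by ring

lemma abs_rpow_sub_rpow_le {p a b : ℝ} (hp0 : 0 ≤ p) (hp1 : p ≤ 1) (ha : 0 ≤ a) (hb : 0 ≤ b) :
    |a ^ p - b ^ p| ≤ |a - b| ^ p := by
  wlog hba : b ≤ a generalizing a b
  · rw [abs_sub_comm, abs_sub_comm a]
    exact this hb ha (by linarith)
  have hsub : a ^ p ≤ b ^ p + (a - b) ^ p := by
    simpa using rpow_add_le_add_rpow hb (sub_nonneg.2 hba) hp0 hp1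
  rw [abs_of_nonneg (sub_nonneg.2 (rpow_le_rpow hb hba hp0)), abs_of_nonneg (sub_nonneg.2 hba)]
  linarith

noncomputable def absPowDiff (p u t x : ℝ) : ℝ := |t - x| ^ p - |u - x| ^ p

section absPowDiff

variable {p u t : ℝ}

lemma abs_absPowDiff_le (hp0 : 0 ≤ p) (hp1 : p ≤ 1) (hut : u ≤ t) (x : ℝ) :
    |absPowDiff p u t x| ≤ (t - u) ^ p :=
  calc |absPowDiff p u t x| ≤ |(|t - x| - |u - x|)| ^ p :=
        abs_rpow_sub_rpow_le hp0 hp1 (abs_nonneg _) (abs_nonneg _)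
    _ ≤ |(t - x) - (u - x)| ^ p :=
        rpow_le_rpow (abs_nonneg _) (abs_abs_sub_abs_le_abs_sub _ _) hp0
    _ = (t - u) ^ p := by rw [sub_sub_sub_cancel_right, abs_of_nonneg (sub_nonneg.2 hut)]

lemma absPowDiff_monotoneOn_Iic (hp0 : 0 ≤ p) (hp1 : p ≤ 1) (hut : u ≤ t) :
    MonotoneOn (absPowDiff p u t) (Set.Iic u) := by
  intro x (hx : x ≤ u) y (hy : y ≤ u) hxy
  have key := (concaveOn_rpow hp0 hp1).add_le_add_of_le (a := u - y) (b := u - x) (c := t - u)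
    (Set.mem_Ici.2 (sub_nonneg.2 hy)) (Set.mem_Ici.2 (by linarith)) (by linarith) (sub_nonneg.2 hut)
  simp only [absPowDiff]
  rw [abs_of_nonneg (by linarith : 0 ≤ t - x), abs_of_nonneg (by linarith : 0 ≤ u - x),
    abs_of_nonneg (by linarith : 0 ≤ t - y), abs_of_nonneg (by linarith : 0 ≤ u - y)]
  rw [show u - x + (t - u) = t - x by ring, show u - y + (t - u) = t - y by ring] at key
  linarith

lemma absPowDiff_antitoneOn_Icc (hp0 : 0 ≤ p) : AntitoneOn (absPowDiff p u t) (Set.Icc u t) := by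
  rintro x ⟨hux, hxt⟩ y ⟨huy, hyt⟩ hxy
  simp only [absPowDiff]
  rw [abs_of_nonneg (by linarith : 0 ≤ t - x), abs_of_nonpos (by linarith : u - x ≤ 0),
    abs_of_nonneg (by linarith : 0 ≤ t - y), abs_of_nonpos (by linarith : u - y ≤ 0)]
  have h₁ : (t - y) ^ p ≤ (t - x) ^ p := rpow_le_rpow (by linarith) (by linarith) hp0
  have h₂ : (-(u - x)) ^ p ≤ (-(u - y)) ^ p := rpow_le_rpow (by linarith) (by linarith) hp0
  linarith

lemma absPowDiff_monotoneOn_Ici (hp0 : 0 ≤ p) (hp1 : p ≤ 1) (hut : u ≤ t) :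
    MonotoneOn (absPowDiff p u t) (Set.Ici t) := by
  intro x (hx : t ≤ x) y (hy : t ≤ y) hxy
  have key := (concaveOn_rpow hp0 hp1).add_le_add_of_le (a := x - t) (b := y - t) (c := t - u)
    (Set.mem_Ici.2 (sub_nonneg.2 hx)) (Set.mem_Ici.2 (by linarith)) (by linarith) (sub_nonneg.2 hut)
  simp only [absPowDiff]
  rw [abs_of_nonpos (by linarith : t - x ≤ 0), abs_of_nonpos (by linarith : u - x ≤ 0),
    abs_of_nonpos (by linarith : t - y ≤ 0), abs_of_nonpos (by linarith : u - y ≤ 0)]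
  rw [show y - t + (t - u) = -(u - y) by ring, show x - t + (t - u) = -(u - x) by ring,
    show x - t = -(t - x) by ring, show y - t = -(t - y) by ring] at key
  linarith

end absPowDiff

lemma sum_range_abs_sub_absPowDiff_le {p u t : ℝ} (hp0 : 0 ≤ p) (hp1 : p ≤ 1) (hut : u ≤ t)
    {x : ℕ → ℝ} (hx : Monotone x) (N : ℕ) :
    ∑ j ∈ Finset.range N, |absPowDiff p u t (x (j + 1)) - absPowDiff p u t (x j)|
      ≤ 6 * (t - u) ^ p :=
  sum_range_abs_sub_comp_le hut (absPowDiff_monotoneOn_Iic hp0 hp1 hut)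
    (absPowDiff_antitoneOn_Icc hp0) (absPowDiff_monotoneOn_Ici hp0 hp1 hut)
    (abs_absPowDiff_le hp0 hp1 hut) hx N

lemma cast_mul_div_div_le_div (i m n : ℕ) : ((i * m / n : ℕ) : ℝ) / m ≤ i / n := by
  rcases Nat.eq_zero_or_pos m with rfl | hm
  · simp only [Nat.cast_zero, div_zero]; positivity
  calc ((i * m / n : ℕ) : ℝ) / m ≤ ((i * m : ℕ) : ℝ) / n / m := by gcongr; exact Nat.cast_div_le
    _ = i / n := by push_cast; field_simp

lemma add_one_div_sub_cast_mul_div_div_le {i m n : ℕ} (hm : 0 < m) (hmn : m ≤ n) :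
    ((i : ℝ) + 1) / n - ((i * m / n : ℕ) : ℝ) / m ≤ 2 / m := by
  have hm' : (0 : ℝ) < m := by exact_mod_cast hm
  have hfloor : (i : ℝ) * m / n < ((i * m / n : ℕ) : ℝ) + 1 := by
    rw [← Nat.floor_div_eq_div (K := ℝ)]; push_cast; exact Nat.lt_floor_add_one _
  have hnm : (1 : ℝ) / n ≤ 1 / m := one_div_le_one_div_of_le hm' (by exact_mod_cast hmn)
  have hin : (i : ℝ) / n < ((i * m / n : ℕ) : ℝ) / m + 1 / m := by
    rw [← add_div, lt_div_iff₀ hm']; rwa [div_mul_eq_mul_div]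
  linarith [show ((i : ℝ) + 1) / n = i / n + 1 / n by ring,
    show (2 : ℝ) / m = 1 / m + 1 / m by ring]

lemma rpow_le_two_mul_rpow_neg {p δ m : ℝ} (hp0 : 0 ≤ p) (hp1 : p ≤ 1) (hm : 0 < m)
    (hδ0 : 0 ≤ δ) (hδ : δ ≤ 2 / m) : δ ^ p ≤ 2 * m ^ (-p) :=
  calc δ ^ p ≤ (2 / m) ^ p := rpow_le_rpow hδ0 hδ hp0
    _ = 2 ^ p * m ^ (-p) := by rw [div_rpow zero_le_two hm.le, rpow_neg hm.le, div_eq_mul_inv]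
    _ ≤ 2 * m ^ (-p) := by
        gcongr
        simpa using rpow_le_rpow_of_exponent_le one_le_two hp1

section Increments

variable {Ω : Type*} [MeasurableSpace Ω] {P : Measure Ω} {H : ℝ} {B : ℝ → Ω → ℝ}

lemma integrable_increment_mul_increment
    (hint : ∀ s t : ℝ, Integrable (fun ω => B s ω * B t ω) P) (a b u t : ℝ) :
    Integrable (fun ω => (B b ω - B a ω) * (B t ω - B u ω)) P := by
  refine (((hint b t).sub (hint b u)).sub ((hint a t).sub (hint a u))).congr
    (.of_forall fun ω => ?_)
  simp only [Pi.sub_apply]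
  ring

lemma integral_increment_mul_increment
    (hint : ∀ s t : ℝ, Integrable (fun ω => B s ω * B t ω) P)
    (hcov : ∀ s t : ℝ, 0 ≤ s → 0 ≤ t → ∫ ω, B s ω * B t ω ∂P = fbmCov H s t)
    {a b u t : ℝ} (ha : 0 ≤ a) (hb : 0 ≤ b) (hu : 0 ≤ u) (ht : 0 ≤ t) :
    ∫ ω, (B b ω - B a ω) * (B t ω - B u ω) ∂P
      = (absPowDiff (2 * H) u t a - absPowDiff (2 * H) u t b) / 2 := by
  have hIb : Integrable (fun ω => B b ω * B t ω - B b ω * B u ω) P := (hint b t).sub (hint b u)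
  have hIa : Integrable (fun ω => B a ω * B t ω - B a ω * B u ω) P := (hint a t).sub (hint a u)
  rw [show (fun ω => (B b ω - B a ω) * (B t ω - B u ω))
      = fun ω => (B b ω * B t ω - B b ω * B u ω) - (B a ω * B t ω - B a ω * B u ω) by ext; ring,
    integral_sub hIb hIa,
    integral_sub (hint b t) (hint b u), integral_sub (hint a t) (hint a u),
    hcov b t hb ht, hcov b u hb hu, hcov a t ha ht, hcov a u ha hu]
  simp only [fbmCov, absPowDiff]
  ring

lemma sum_range_abs_integral_increment_mul_increment_le
    (hint : ∀ s t : ℝ, Integrable (fun ω => B s ω * B t ω) P)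
    (hcov : ∀ s t : ℝ, 0 ≤ s → 0 ≤ t → ∫ ω, B s ω * B t ω ∂P = fbmCov H s t)
    (hH0 : 0 ≤ H) (hH : H ≤ 1 / 2) {u t : ℝ} (hu : 0 ≤ u) (hut : u ≤ t)
    {x : ℕ → ℝ} (hx : Monotone x) (hx0 : 0 ≤ x 0) (N : ℕ) :
    ∑ j ∈ Finset.range N, |∫ ω, (B (x (j + 1)) ω - B (x j) ω) * (B t ω - B u ω) ∂P|
      ≤ 3 * (t - u) ^ (2 * H) := by
  have hxj : ∀ j, 0 ≤ x j := fun j => hx0.trans (hx j.zero_le)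
  calc ∑ j ∈ Finset.range N, |∫ ω, (B (x (j + 1)) ω - B (x j) ω) * (B t ω - B u ω) ∂P|
      = (∑ j ∈ Finset.range N,
          |absPowDiff (2 * H) u t (x (j + 1)) - absPowDiff (2 * H) u t (x j)|) / 2 := by
        rw [Finset.sum_div]
        refine Finset.sum_congr rfl fun j _ => ?_
        rw [integral_increment_mul_increment hint hcov (hxj j) (hxj (j + 1)) hu (hu.trans hut),
          abs_div, abs_two, abs_sub_comm]
    _ ≤ 6 * (t - u) ^ (2 * H) / 2 := by
        gcongr
        exact sum_range_abs_sub_absPowDiff_le (by linarith) (by linarith) hut hx N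
    _ = 3 * (t - u) ^ (2 * H) := by ring

lemma sum_range_abs_integral_increment_mul_midpoint_sub_le
    (hint : ∀ s t : ℝ, Integrable (fun ω => B s ω * B t ω) P)
    (hcov : ∀ s t : ℝ, 0 ≤ s → 0 ≤ t → ∫ ω, B s ω * B t ω ∂P = fbmCov H s t)
    (hH0 : 0 ≤ H) (hH : H ≤ 1 / 2) {u s s' : ℝ} (hu : 0 ≤ u) (hus : u ≤ s) (hss' : s ≤ s')
    {x : ℕ → ℝ} (hx : Monotone x) (hx0 : 0 ≤ x 0) (N : ℕ) :
    ∑ j ∈ Finset.range N,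
        |∫ ω, (B (x (j + 1)) ω - B (x j) ω) * ((B s ω + B s' ω) / 2 - B u ω) ∂P|
      ≤ 3 * (s' - u) ^ (2 * H) := by
  set I : ℝ → ℕ → ℝ := fun t j => ∫ ω, (B (x (j + 1)) ω - B (x j) ω) * (B t ω - B u ω) ∂P
  have hmid : ∀ j, ∫ ω, (B (x (j + 1)) ω - B (x j) ω) * ((B s ω + B s' ω) / 2 - B u ω) ∂P
      = (I s j + I s' j) / 2 := by
    intro j
    rw [← integral_add (integrable_increment_mul_increment hint _ _ _ _)
      (integrable_increment_mul_increment hint _ _ _ _), ← integral_div]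
    congr 1 with ω
    ring
  have hpow : (s - u) ^ (2 * H) ≤ (s' - u) ^ (2 * H) :=
    rpow_le_rpow (by linarith) (by linarith) (by linarith)
  calc ∑ j ∈ Finset.range N,
        |∫ ω, (B (x (j + 1)) ω - B (x j) ω) * ((B s ω + B s' ω) / 2 - B u ω) ∂P|
      ≤ (∑ j ∈ Finset.range N, |I s j| + ∑ j ∈ Finset.range N, |I s' j|) / 2 := by
        rw [← Finset.sum_add_distrib, Finset.sum_div]
        refine Finset.sum_le_sum fun j _ => ?_
        rw [hmid, abs_div, abs_two]
        gcongr
        exact abs_add_le _ _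
    _ ≤ (3 * (s - u) ^ (2 * H) + 3 * (s' - u) ^ (2 * H)) / 2 := by
        gcongr
        · exact sum_range_abs_integral_increment_mul_increment_le hint hcov hH0 hH hu hus hx hx0 N
        · exact sum_range_abs_integral_increment_mul_increment_le hint hcov hH0 hH hu
            (hus.trans hss') hx hx0 N
    _ ≤ 3 * (s' - u) ^ (2 * H) := by linarith

end Increments

theorem fbm_two_partitions_bound_three_general {Ω : Type*} [MeasurableSpace Ω] (P : Measure Ω)
    (H : ℝ) (hH0 : 0 < H) (hH : H < 1/2)
    (B : ℝ → Ω → ℝ)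
    (hint : ∀ s t : ℝ, Integrable (fun ω => B s ω * B t ω) P)
    (hcov : ∀ s t : ℝ, 0 ≤ s → 0 ≤ t → ∫ ω, B s ω * B t ω ∂P = fbmCov H s t)
    (T : ℝ) :
    ∃ C > 0, ∀ m n : ℕ, 2 ≤ m → m < n → ∀ i : ℕ, i < ⌊(n:ℝ)*T⌋₊ →
      ∑ j ∈ Finset.range ⌊(n:ℝ)*T⌋₊,
        |∫ ω, (B (((j:ℝ)+1)/n) ω - B ((j:ℝ)/n) ω) *
              ((B ((i:ℝ)/n) ω + B (((i:ℝ)+1)/n) ω)/2 - B ((((i*m)/n : ℕ) : ℝ)/m) ω) ∂P|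
      ≤ C * (m : ℝ) ^ (-(2*H)) := by
  refine ⟨6, by norm_num, fun m n hm hmn i _ => ?_⟩
  have hm0 : (0 : ℝ) < m := by exact_mod_cast (by omega : 0 < m)
  have hgrid : Monotone fun j : ℕ => (j : ℝ) / n := fun _ _ hjk => by dsimp only; gcongr
  set u : ℝ := (((i*m)/n : ℕ) : ℝ)/m
  have hus : u ≤ (i:ℝ)/n := cast_mul_div_div_le_div i m n
  have hss' : (i:ℝ)/n ≤ ((i:ℝ)+1)/n := by gcongr; linarith
  have hsum := sum_range_abs_integral_increment_mul_midpoint_sub_le (P := P) hint hcov hH0.le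
    hH.le (by positivity) hus hss' hgrid (by simp) ⌊(n:ℝ)*T⌋₊
  push_cast at hsum
  calc _ ≤ 3 * (((i:ℝ)+1)/n - u) ^ (2 * H) := hsum
    _ ≤ 3 * (2 * (m : ℝ) ^ (-(2*H))) := by
        gcongr
        exact rpow_le_two_mul_rpow_neg (by linarith) (by linarith) hm0
          (sub_nonneg.2 (hus.trans hss')) (add_one_div_sub_cast_mul_div_div_le (by omega) hmn.le)
    _ = 6 * (m : ℝ) ^ (-(2*H)) := by ring

theorem fbm_two_partitions_bound_three {Ω : Type*} [MeasurableSpace Ω] (P : Measure Ω)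
    [IsProbabilityMeasure P]
    (H : ℝ) (hH0 : 0 < H) (hH : H < 1/2)
    (B : ℝ → Ω → ℝ)
    (hint : ∀ s t : ℝ, Integrable (fun ω => B s ω * B t ω) P)
    (hcov : ∀ s t : ℝ, 0 ≤ s → 0 ≤ t → ∫ ω, B s ω * B t ω ∂P = fbmCov H s t)
    (T : ℝ) (hT : 0 < T) :
    ∃ C > 0, ∀ m n : ℕ, 2 ≤ m → m < n → ∀ i : ℕ, i < ⌊(n:ℝ)*T⌋₊ →
      ∑ j ∈ Finset.range ⌊(n:ℝ)*T⌋₊,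
        |∫ ω, (B (((j:ℝ)+1)/n) ω - B ((j:ℝ)/n) ω) *
              ((B ((i:ℝ)/n) ω + B (((i:ℝ)+1)/n) ω)/2 - B ((((i*m)/n : ℕ) : ℝ)/m) ω) ∂P|
      ≤ C * (m : ℝ) ^ (-(2*H)) :=
  fbm_two_partitions_bound_three_general P H hH0 hH B hint hcov T
end

section
/- Let B^H be a fractional Brownian motion with H = 1/(4ℓ+2) for an integer ℓ ≥ 1, let C : ℝ² → ℝ be continuous with C(a,a) = 0 for all a, and define R_n(t) = Σ_{j=0}^{⌊nt⌋-1} C(B^H_{j/n}, B^H_{(j+1)/n}) (B^H_{(j+1)/n} - B^H_{j/n})^{4ℓ+2}. Then for every T > 0 and ε > 0, P(sup_{0≤t≤T} |R_n(t)| > ε) → 0 as n → ∞; that is, R_n converges to 0 in probability uniformly on compact sets. -/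
open MeasureTheory ProbabilityTheory Real

open Filter Finset
open scoped NNReal ENNReal Topology

/-!
On `[0, T]` the remainder is dominated by `Xₙ · Vₙ`, where `Xₙ` is the largest
`|C(B_{j/n}, B_{(j+1)/n})|` along the grid and `Vₙ = ∑ⱼ |B_{(j+1)/n} - B_{j/n}|^(4ℓ+2)`.
Pathwise `Xₙ → 0`, because `(s, t) ↦ C(B_s, B_t)` is uniformly continuous on `[0, T]²` and
vanishes on the diagonal. Since `H (4ℓ+2) = 1`, every increment has
`E |ΔB|^(4ℓ+2) = μ_{4ℓ+2} / n`, so `E Vₙ ≤ T μ_{4ℓ+2}`; and a sequence tending to `0` in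
probability times a sequence bounded in `L¹` tends to `0` in probability.
-/

theorem abs_sum_mul_le_sup_nnnorm_mul_sum_abs {ι : Type*} {s t : Finset ι} (hst : s ⊆ t)
    (a b : ι → ℝ) :
    |∑ j ∈ s, a j * b j| ≤ (t.sup fun j => ‖a j‖₊ : ℝ≥0) * ∑ j ∈ t, |b j| := by
  calc |∑ j ∈ s, a j * b j| ≤ ∑ j ∈ s, |a j| * |b j| := by
        simpa only [abs_mul] using Finset.abs_sum_le_sum_abs (fun j => a j * b j) s
    _ ≤ ∑ j ∈ t, |a j| * |b j| :=
        sum_le_sum_of_subset_of_nonneg hst fun j _ _ =>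
          mul_nonneg (abs_nonneg (a j)) (abs_nonneg (b j))
    _ ≤ ∑ j ∈ t, (t.sup fun j => ‖a j‖₊ : ℝ≥0) * |b j| := by
        gcongr with j hj
        exact_mod_cast le_sup (f := fun j => ‖a j‖₊) hj
    _ = _ := by rw [mul_sum]

theorem gridPoints_mem_Icc {n j : ℕ} {T : ℝ} (hj : j < ⌊n * T⌋₊) :
    (j : ℝ) / n ∈ Set.Icc 0 T ∧ ((j : ℝ) + 1) / n ∈ Set.Icc 0 T := by
  have hjT : (j : ℝ) + 1 ≤ n * T := by exact_mod_cast (Nat.le_floor_iff' j.succ_ne_zero).1 hj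
  have hn : (0 : ℝ) < n := by
    rcases Nat.eq_zero_or_pos n with rfl | hn
    · simp at hj
    · exact_mod_cast hn
  refine ⟨⟨by positivity, ?_⟩, ⟨by positivity, ?_⟩⟩ <;> rw [div_le_iff₀' hn] <;> linarith

theorem tendsto_sup_nnnorm_grid {g : ℝ → ℝ → ℝ} (hg : Continuous (Function.uncurry g))
    (hdiag : ∀ t, g t t = 0) (T : ℝ) :
    Tendsto (fun n : ℕ => (range ⌊n * T⌋₊).sup fun j => ‖g (j / n) ((j + 1) / n)‖₊)
      atTop (𝓝 0) := by
  refine tendsto_order.2 ⟨fun a ha => absurd ha not_lt_zero, fun δ hδ => ?_⟩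
  obtain ⟨ρ, hρ, hg_unif⟩ := Metric.uniformContinuousOn_iff.1
    ((isCompact_Icc.prod isCompact_Icc).uniformContinuousOn_of_continuous
      (s := Set.Icc 0 T ×ˢ Set.Icc 0 T) hg.continuousOn) δ (by exact_mod_cast hδ)
  obtain ⟨n₀, hn₀⟩ := exists_nat_gt ρ⁻¹
  filter_upwards [eventually_ge_atTop n₀] with n hn
  refine (Finset.sup_lt_iff (bot_lt_iff_ne_bot.2 hδ.ne')).2 fun j hj => ?_
  obtain ⟨hs, ht⟩ := gridPoints_mem_Icc (mem_range.1 hj)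
  have hρn : ρ⁻¹ < n := hn₀.trans_le (by exact_mod_cast hn)
  have hn_pos : (0 : ℝ) < n := (inv_pos.2 hρ).trans hρn
  have hdist : dist ((j : ℝ) / n, ((j : ℝ) + 1) / n) (((j : ℝ) + 1) / n, ((j : ℝ) + 1) / n)
      < ρ := by
    rw [Prod.dist_eq, dist_self, max_eq_left dist_nonneg, Real.dist_eq,
      show (j : ℝ) / n - (j + 1) / n = -(1 / n) by ring, abs_neg, abs_of_pos (by positivity),
      one_div, inv_lt_comm₀ hn_pos hρ]
    exact hρn
  have := hg_unif _ ⟨hs, ht⟩ _ ⟨ht, ht⟩ hdist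
  rw [Real.dist_eq] at this
  simpa [hdiag, ← NNReal.coe_lt_coe] using this

theorem Finset.measurable_sup_apply {α δ ι : Type*} [MeasurableSpace δ] [MeasurableSpace α]
    [SemilatticeSup α] [OrderBot α] [MeasurableSup₂ α] {s : Finset ι} {f : ι → δ → α}
    (hf : ∀ i ∈ s, Measurable (f i)) : Measurable fun x => s.sup fun i => f i x := by
  simp_rw [← Finset.sup_apply]
  exact Finset.sup_induction measurable_const (fun _ h₁ _ h₂ => h₁.sup h₂) hf

theorem MeasureTheory.TendstoInMeasure.mul_of_lintegral_le {Ω ι : Type*} [MeasurableSpace Ω]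
    {μ : Measure Ω} {l : Filter ι} {X Y : ι → Ω → ℝ} (hX : TendstoInMeasure μ X l 0)
    (hY : ∀ i, AEMeasurable (Y i) μ) {K : ℝ≥0∞} (hK : K ≠ ∞)
    (hYK : ∀ᶠ i in l, ∫⁻ ω, ‖Y i ω‖ₑ ∂μ ≤ K) :
    TendstoInMeasure μ (fun i ω => X i ω * Y i ω) l 0 := by
  refine tendstoInMeasure_of_ne_top fun ε hε hε_top => ?_
  simp only [Pi.zero_apply, edist_zero_right, enorm_mul]
  rw [ENNReal.tendsto_nhds_zero]
  intro η hη
  have hη2 : 0 < η / 2 := ENNReal.half_pos hη.ne'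
  obtain ⟨M, hKM, hM⟩ : ∃ M : ℕ, K * (M : ℝ≥0∞)⁻¹ < η / 2 ∧ 1 ≤ M := by
    have hlim : Tendsto (fun M : ℕ => K * (M : ℝ≥0∞)⁻¹) atTop (𝓝 0) := by
      simpa using ENNReal.Tendsto.const_mul ENNReal.tendsto_inv_nat_nhds_zero (Or.inr hK)
    exact ((hlim.eventually (gt_mem_nhds hη2)).and (eventually_ge_atTop 1)).exists
  have hM0 : (M : ℝ≥0∞) ≠ 0 := by simp; omega
  have hδ : 0 < ε / M := ENNReal.div_pos hε.ne' (ENNReal.natCast_ne_top M)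
  have hsub : ∀ i, {ω | ε ≤ ‖X i ω‖ₑ * ‖Y i ω‖ₑ} ⊆
      {ω | ε / M ≤ ‖X i ω‖ₑ} ∪ {ω | (M : ℝ≥0∞) ≤ ‖Y i ω‖ₑ} := by
    intro i ω hω
    by_contra h
    simp only [Set.mem_union, Set.mem_ofPred_eq, not_or, not_le] at h
    have := ENNReal.mul_lt_mul h.1 h.2
    rw [ENNReal.div_mul_cancel hM0 (ENNReal.natCast_ne_top M)] at this
    exact (lt_of_le_of_lt hω this).false
  have hmarkov : ∀ i, ∫⁻ ω, ‖Y i ω‖ₑ ∂μ ≤ K → μ {ω | (M : ℝ≥0∞) ≤ ‖Y i ω‖ₑ} ≤ η / 2 := by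
    intro i hi
    calc μ {ω | (M : ℝ≥0∞) ≤ ‖Y i ω‖ₑ} ≤ (∫⁻ ω, ‖Y i ω‖ₑ ∂μ) / M :=
          meas_ge_le_lintegral_div (hY i).enorm hM0 (ENNReal.natCast_ne_top M)
      _ ≤ K * (M : ℝ≥0∞)⁻¹ := by rw [div_eq_mul_inv]; gcongr
      _ ≤ η / 2 := hKM.le
  filter_upwards [(hX (ε / M) hδ).eventually (Iic_mem_nhds hη2), hYK] with i hXi hYi
  simp only [Pi.zero_apply, edist_zero_right] at hXi
  calc μ {ω | ε ≤ ‖X i ω‖ₑ * ‖Y i ω‖ₑ}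
      ≤ μ {ω | ε / M ≤ ‖X i ω‖ₑ} + μ {ω | (M : ℝ≥0∞) ≤ ‖Y i ω‖ₑ} :=
        (measure_mono (hsub i)).trans (measure_union_le _ _)
    _ ≤ η / 2 + η / 2 := add_le_add hXi (hmarkov i hYi)
    _ = η := ENNReal.add_halves η

theorem lintegral_enorm_pow_gaussianReal_lt_top (m : ℕ) (μ : ℝ) (v : ℝ≥0) :
    ∫⁻ x, ‖x‖ₑ ^ m ∂gaussianReal μ v < ∞ := by
  have h := (memLp_id_gaussianReal' (μ := μ) (v := v) m
    (ENNReal.natCast_ne_top m)).integrable_norm_pow'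
  simpa [HasFiniteIntegral, enorm_pow] using h.hasFiniteIntegral

theorem lintegral_enorm_pow_gaussianReal (m : ℕ) (v : ℝ≥0) :
    ∫⁻ x, ‖x‖ₑ ^ m ∂gaussianReal 0 v
      = ENNReal.ofReal (√v ^ m) * ∫⁻ x, ‖x‖ₑ ^ m ∂gaussianReal 0 1 := by
  have hmap : (gaussianReal 0 1).map (√v * ·) = gaussianReal 0 v := by
    rw [gaussianReal_map_const_mul]
    congr 1
    · ring
    · ext; simp
  rw [← hmap, lintegral_map (by fun_prop) (measurable_const_mul _),
    ← lintegral_const_mul' _ _ ENNReal.ofReal_ne_top]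
  congr with x
  rw [enorm_mul, mul_pow, Real.enorm_of_nonneg (Real.sqrt_nonneg _),
    ENNReal.ofReal_pow (Real.sqrt_nonneg _)]

def HasFBmMarginals {Ω : Type*} [MeasurableSpace Ω] (P : Measure Ω) (B : ℝ → Ω → ℝ) (H : ℝ) :
    Prop :=
  ∀ (k : ℕ) (t c : Fin k → ℝ), (∀ i, 0 ≤ t i) →
    Measure.map (fun ω => ∑ i, c i * B (t i) ω) P =
      gaussianReal 0 (Real.toNNReal (∑ i, ∑ j, c i * c j * fbmCov H (t i) (t j)))

section Increments

variable {Ω : Type*} [MeasurableSpace Ω] {P : Measure Ω} {B : ℝ → Ω → ℝ} {H : ℝ}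

theorem HasFBmMarginals.map_sub (hB : HasFBmMarginals P B H) (hH : 0 < H) {s t : ℝ}
    (hs : 0 ≤ s) (ht : 0 ≤ t) :
    P.map (fun ω => B t ω - B s ω) = gaussianReal 0 (|t - s| ^ (2 * H)).toNNReal := by
  have h := hB 2 ![s, t] ![-1, 1] (by simp [Fin.forall_fin_two, hs, ht])
  have hH2 : 2 * H ≠ 0 := by positivity
  simp only [Fin.sum_univ_two, fbmCov, Matrix.cons_val_zero, Matrix.cons_val_one, sub_self,
    abs_zero, Real.zero_rpow hH2, abs_sub_comm s t] at h
  convert h using 3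
  · ring
  · ring

theorem HasFBmMarginals.lintegral_enorm_sub_pow (hB : HasFBmMarginals P B H) (hH : 0 < H)
    (hmeas : ∀ t, Measurable (B t)) {s t : ℝ} (hs : 0 ≤ s) (ht : 0 ≤ t) (m : ℕ) :
    ∫⁻ ω, ‖B t ω - B s ω‖ₑ ^ m ∂P
      = ENNReal.ofReal (|t - s| ^ (H * m)) * ∫⁻ x, ‖x‖ₑ ^ m ∂gaussianReal 0 1 := by
  rw [← lintegral_map (f := fun x : ℝ => ‖x‖ₑ ^ m) (g := fun ω => B t ω - B s ω) (by fun_prop)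
      ((hmeas t).sub (hmeas s)),
    hB.map_sub hH hs ht, lintegral_enorm_pow_gaussianReal,
    Real.coe_toNNReal _ (by positivity), Real.sqrt_eq_rpow, ← Real.rpow_mul (abs_nonneg _),
    ← Real.rpow_natCast, ← Real.rpow_mul (abs_nonneg _)]
  congr 3
  ring

theorem HasFBmMarginals.lintegral_gridPowerVariation_le (hB : HasFBmMarginals P B H)
    (hH : 0 < H) (hmeas : ∀ t, Measurable (B t)) {m : ℕ} (hHm : H * m = 1) (T : ℝ) (n : ℕ) :
    ∫⁻ ω, ‖∑ j ∈ range ⌊n * T⌋₊, |B ((j + 1) / n) ω - B (j / n) ω| ^ m‖ₑ ∂P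
      ≤ ENNReal.ofReal T * ∫⁻ x, ‖x‖ₑ ^ m ∂gaussianReal 0 1 := by
  rcases Nat.eq_zero_or_pos n with rfl | hn
  · simp
  have hn' : (0 : ℝ) < n := by exact_mod_cast hn
  have hterm : ∀ j : ℕ, ∫⁻ ω, ‖B ((j + 1) / n) ω - B (j / n) ω‖ₑ ^ m ∂P
      = ENNReal.ofReal (1 / n) * ∫⁻ x, ‖x‖ₑ ^ m ∂gaussianReal 0 1 := fun j => by
    rw [hB.lintegral_enorm_sub_pow hH hmeas (by positivity) (by positivity),
      show ((j : ℝ) + 1) / n - j / n = 1 / n by ring, abs_of_pos (by positivity), hHm,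
      Real.rpow_one]
  have hNT : ENNReal.ofReal (⌊n * T⌋₊ / n) ≤ ENNReal.ofReal T := by
    rcases le_or_gt 0 T with hT | hT
    · exact ENNReal.ofReal_le_ofReal ((div_le_iff₀' hn').2 (Nat.floor_le (by positivity)))
    · simp [Nat.floor_of_nonpos (mul_nonpos_of_nonneg_of_nonpos hn'.le hT.le)]
  calc ∫⁻ ω, ‖∑ j ∈ range ⌊n * T⌋₊, |B ((j + 1) / n) ω - B (j / n) ω| ^ m‖ₑ ∂P
      = ∑ j ∈ range ⌊n * T⌋₊, ∫⁻ ω, ‖B ((j + 1) / n) ω - B (j / n) ω‖ₑ ^ m ∂P := by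
        rw [← lintegral_finsetSum _ fun j _ => by fun_prop]
        refine lintegral_congr fun ω => ?_
        rw [Real.enorm_of_nonneg (by positivity),
          ENNReal.ofReal_sum_of_nonneg fun _ _ => by positivity]
        simp_rw [← abs_pow, ← Real.enorm_eq_ofReal_abs, enorm_pow]
    _ = ENNReal.ofReal (⌊n * T⌋₊ / n) * ∫⁻ x, ‖x‖ₑ ^ m ∂gaussianReal 0 1 := by
        rw [sum_congr rfl fun j _ => hterm j, sum_const, card_range, nsmul_eq_mul, ← mul_assoc,
          ← ENNReal.ofReal_natCast, ← ENNReal.ofReal_mul (by positivity), mul_one_div]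
    _ ≤ ENNReal.ofReal T * ∫⁻ x, ‖x‖ₑ ^ m ∂gaussianReal 0 1 := by gcongr

end Increments

theorem remainder_tendsto_zero_in_probability_general {Ω : Type*} [MeasurableSpace Ω]
    (P : Measure Ω) [IsProbabilityMeasure P]
    (ℓ : ℕ) (H : ℝ) (hH : H = 1/(4*(ℓ:ℝ)+2))
    (B : ℝ → Ω → ℝ)
    (hmeas : ∀ t, Measurable (B t))
    (hcont : ∀ ω, Continuous (fun t => B t ω))
    (hgauss : ∀ (k : ℕ) (t c : Fin k → ℝ), (∀ i, 0 ≤ t i) →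
      Measure.map (fun ω => ∑ i, c i * B (t i) ω) P =
        gaussianReal 0 (Real.toNNReal (∑ i, ∑ j, c i * c j * fbmCov H (t i) (t j))))
    (C : ℝ → ℝ → ℝ) (hC : Continuous (fun p : ℝ × ℝ => C p.1 p.2))
    (hCdiag : ∀ a : ℝ, C a a = 0)
    (T ε : ℝ) (hε : 0 < ε) :
    Filter.Tendsto (fun n : ℕ =>
      P {ω | ∃ t ∈ Set.Icc (0:ℝ) T,
        ε < |∑ j ∈ Finset.range ⌊(n:ℝ)*t⌋₊,
          C (B ((j:ℝ)/n) ω) (B (((j:ℝ)+1)/n) ω) *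
            (B (((j:ℝ)+1)/n) ω - B ((j:ℝ)/n) ω) ^ (4*ℓ+2)|})
      Filter.atTop (nhds 0) := by
  have hH0 : 0 < H := by rw [hH]; positivity
  have hHm : H * ((4 * ℓ + 2 : ℕ) : ℝ) = 1 := by rw [hH]; push_cast; field_simp
  set X : ℕ → Ω → ℝ := fun n ω =>
    ((range ⌊n * T⌋₊).sup fun j => ‖C (B (j / n) ω) (B ((j + 1) / n) ω)‖₊ : ℝ≥0)
  set V : ℕ → Ω → ℝ := fun n ω =>
    ∑ j ∈ range ⌊n * T⌋₊, |B ((j + 1) / n) ω - B (j / n) ω| ^ (4 * ℓ + 2)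
  have hX : TendstoInMeasure P X atTop 0 :=
    tendstoInMeasure_of_tendsto_ae
      (fun n => (Finset.measurable_sup_apply fun j _ =>
        (hC.measurable.comp ((hmeas _).prodMk (hmeas _))).nnnorm).coe_nnreal_real
          |>.aestronglyMeasurable)
      (ae_of_all _ fun ω => NNReal.tendsto_coe.2 <|
        tendsto_sup_nnnorm_grid (g := fun s t => C (B s ω) (B t ω))
          (hC.comp ((hcont ω).prodMap (hcont ω))) (fun t => hCdiag _) T)
  have hXY := hX.mul_of_lintegral_le (fun n => by fun_prop)
    (ENNReal.mul_ne_top ENNReal.ofReal_ne_top (lintegral_enorm_pow_gaussianReal_lt_top _ 0 1).ne)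
    (Eventually.of_forall
      (HasFBmMarginals.lintegral_gridPowerVariation_le hgauss hH0 hmeas hHm T))
    (ENNReal.ofReal ε) (ENNReal.ofReal_pos.2 hε)
  refine tendsto_of_tendsto_of_tendsto_of_le_of_le tendsto_const_nhds hXY (fun _ => zero_le)
    fun n => measure_mono ?_
  rintro ω ⟨t, ht, hlt⟩
  have hsub : range ⌊n * t⌋₊ ⊆ range ⌊n * T⌋₊ :=
    range_subset_range.2 (Nat.floor_mono (mul_le_mul_of_nonneg_left ht.2 n.cast_nonneg))
  have hbound := abs_sum_mul_le_sup_nnnorm_mul_sum_abs hsub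
    (fun j : ℕ => C (B (j / n) ω) (B ((j + 1) / n) ω))
    (fun j : ℕ => (B ((j + 1) / n) ω - B (j / n) ω) ^ (4 * ℓ + 2))
  simp only [abs_pow] at hbound
  simp only [Set.mem_ofPred_eq, Pi.zero_apply, edist_zero_right, Real.enorm_eq_ofReal_abs]
  exact ENNReal.ofReal_le_ofReal (hlt.le.trans (hbound.trans (le_abs_self _)))

theorem remainder_tendsto_zero_in_probability {Ω : Type*} [MeasurableSpace Ω]
    (P : Measure Ω) [IsProbabilityMeasure P]
    (ℓ : ℕ) (hℓ : 1 ≤ ℓ) (H : ℝ) (hH : H = 1/(4*(ℓ:ℝ)+2))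
    (B : ℝ → Ω → ℝ)
    (hmeas : ∀ t, Measurable (B t))
    (hcont : ∀ ω, Continuous (fun t => B t ω))
    (hgauss : ∀ (k : ℕ) (t c : Fin k → ℝ), (∀ i, 0 ≤ t i) →
      Measure.map (fun ω => ∑ i, c i * B (t i) ω) P =
        gaussianReal 0 (Real.toNNReal (∑ i, ∑ j, c i * c j * fbmCov H (t i) (t j))))
    (C : ℝ → ℝ → ℝ) (hC : Continuous (fun p : ℝ × ℝ => C p.1 p.2))
    (hCdiag : ∀ a : ℝ, C a a = 0)
    (T ε : ℝ) (hT : 0 < T) (hε : 0 < ε) :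
    Filter.Tendsto (fun n : ℕ =>
      P {ω | ∃ t ∈ Set.Icc (0:ℝ) T,
        ε < |∑ j ∈ Finset.range ⌊(n:ℝ)*t⌋₊,
          C (B ((j:ℝ)/n) ω) (B (((j:ℝ)+1)/n) ω) *
            (B (((j:ℝ)+1)/n) ω - B ((j:ℝ)/n) ω) ^ (4*ℓ+2)|})
      Filter.atTop (nhds 0) :=
  remainder_tendsto_zero_in_probability_general P ℓ H hH B hmeas hcont hgauss C hC hCdiag T ε hε
end
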